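/- arXiv:1806.03478 — 5 statements merged into one kernel-verified Lean document; each statement's English description precedes it below -/
import Mathlib

section
/- If X ~ t_k(ν, Σ) has a multivariate Student-t distribution with k > 1 degrees of freedom, then the matrix τ₁(x) = ((x-ν)ᵀ Σ⁻¹ (x-ν) + k)/(d + k - 2) · Σ is a Stein kernel for X, i.e. div(τ₁ · t_k)(x) = (ν - x) t_k(x) for all x ∈ ℝ^d, where t_k is the Student-t density. -/
/-!
Write `q = (x - ν)ᵀ Σ⁻¹ (x - ν)` and `t_k = C (1 + q/k)^(-(k+d)/2)`. Since `q + k = k (1 + q/k)`,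
the scalar factor of `τ₁ t_k` is a single power, `k C/(d+k-2) · (1 + q/k)^(1-(k+d)/2)`. With
`∇q = 2 Σ⁻¹ (x - ν)` its gradient is `-C (1 + q/k)^(-(k+d)/2) Σ⁻¹ (x - ν) = -t_k Σ⁻¹ (x - ν)`:
the factor `d + k - 2` cancels against the exponent. Taking the `i`-th row of `Σ` against this
gradient gives `(ν - x)_i t_k`.
-/

open MeasureTheory Real Matrix

/-- The multivariate Student-t density with `k` degrees of freedom, location `ν`
and shape matrix `S` on `ℝ^d`. -/
noncomputable def studentDensity (d : ℕ) (k : ℝ) (ν : Fin d → ℝ)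
    (S : Matrix (Fin d) (Fin d) ℝ) (x : Fin d → ℝ) : ℝ :=
  (Real.Gamma ((k + d) / 2) /
      (Real.Gamma (k / 2) * k ^ ((d : ℝ) / 2) * π ^ ((d : ℝ) / 2))) *
    S.det ^ (-(1 : ℝ) / 2) *
    (1 + dotProduct (x - ν) (S⁻¹.mulVec (x - ν)) / k) ^ (-((k + d) / 2))

section Mahalanobis

variable {n : Type*} [Fintype n]

def mahalanobisSq (A : Matrix n n ℝ) (ν y : n → ℝ) : ℝ := (y - ν) ⬝ᵥ A *ᵥ (y - ν)

variable {A : Matrix n n ℝ} {k : ℝ}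

theorem differentiable_mahalanobisSq (A : Matrix n n ℝ) (ν : n → ℝ) :
    Differentiable ℝ (mahalanobisSq A ν) := by
  unfold mahalanobisSq dotProduct mulVec dotProduct
  fun_prop

theorem fderiv_mahalanobisSq_apply [DecidableEq n] (A : Matrix n n ℝ) (ν x h : n → ℝ) :
    fderiv ℝ (mahalanobisSq A ν) x h = (x - ν) ⬝ᵥ A *ᵥ h + h ⬝ᵥ A *ᵥ (x - ν) := by
  let B : (n → ℝ) →L[ℝ] (n → ℝ) →L[ℝ] ℝ := (toLinearMap₂' ℝ A).toContinuousBilinearMap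
  have hB : mahalanobisSq A ν = fun y => B (y - ν) (y - ν) := by
    ext y
    simp [B, mahalanobisSq, toLinearMap₂'_apply']
  have hsub : DifferentiableAt ℝ (fun y : n → ℝ => y - ν) x := by fun_prop
  rw [hB, B.fderiv_of_bilinear hsub hsub, fderiv_sub_const, fderiv_fun_id]
  simp [B, toLinearMap₂'_apply', mulVec_sub]

theorem fderiv_mahalanobisSq_single [DecidableEq n] (hA : A.IsSymm) (ν x : n → ℝ) (j : n) :
    fderiv ℝ (mahalanobisSq A ν) x (Pi.single j 1) = 2 * (A *ᵥ (x - ν)) j := by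
  rw [fderiv_mahalanobisSq_apply, dotProduct_mulVec, ← mulVec_transpose, hA.eq,
    dotProduct_single, single_dotProduct]
  ring

theorem mahalanobisSq_nonneg (hA : A.PosSemidef) (ν y : n → ℝ) : 0 ≤ mahalanobisSq A ν y := by
  simpa [mahalanobisSq] using hA.dotProduct_mulVec_nonneg (y - ν)

theorem one_add_mahalanobisSq_div_pos (hA : A.PosSemidef) (hk : 0 < k) (ν y : n → ℝ) :
    0 < 1 + mahalanobisSq A ν y / k := by
  have := mahalanobisSq_nonneg hA ν y
  positivity

theorem hasFDerivAt_one_add_mahalanobisSq_div_rpow (A : Matrix n n ℝ) (ν : n → ℝ) (s : ℝ)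
    {x : n → ℝ} (hx : 1 + mahalanobisSq A ν x / k ≠ 0) :
    HasFDerivAt (fun y => (1 + mahalanobisSq A ν y / k) ^ s)
      ((s / k * (1 + mahalanobisSq A ν x / k) ^ (s - 1)) • fderiv ℝ (mahalanobisSq A ν) x) x := by
  have hφ : HasDerivAt (fun t => (1 + t / k) ^ s)
      (s / k * (1 + mahalanobisSq A ν x / k) ^ (s - 1)) (mahalanobisSq A ν x) := by
    convert (((hasDerivAt_id' _).div_const k).const_add 1).rpow_const (Or.inl hx) using 1
    ring
  exact hφ.comp_hasFDerivAt x (differentiable_mahalanobisSq A ν x).hasFDerivAt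

end Mahalanobis

noncomputable def studentConst (d : ℕ) (k : ℝ) (S : Matrix (Fin d) (Fin d) ℝ) : ℝ :=
  (Real.Gamma ((k + d) / 2) /
      (Real.Gamma (k / 2) * k ^ ((d : ℝ) / 2) * π ^ ((d : ℝ) / 2))) *
    S.det ^ (-(1 : ℝ) / 2)

theorem studentDensity_eq (d : ℕ) (k : ℝ) (ν : Fin d → ℝ) (S : Matrix (Fin d) (Fin d) ℝ)
    (x : Fin d → ℝ) : studentDensity d k ν S x
      = studentConst d k S * (1 + mahalanobisSq S⁻¹ ν x / k) ^ (-((k + d) / 2)) :=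
  rfl

theorem mahalanobisSq_add_mul_studentDensity {d : ℕ} {k : ℝ} (hk : 0 < k) (ν : Fin d → ℝ)
    {S : Matrix (Fin d) (Fin d) ℝ} (hS : S.PosDef) (x : Fin d → ℝ) :
    (mahalanobisSq S⁻¹ ν x + k) * studentDensity d k ν S x
      = k * studentConst d k S * (1 + mahalanobisSq S⁻¹ ν x / k) ^ (1 - (k + d) / 2) := by
  have hpos := one_add_mahalanobisSq_div_pos hS.inv.posSemidef hk ν x
  rw [studentDensity_eq, sub_eq_add_neg, rpow_add hpos, rpow_one]
  field_simp
  ring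

theorem student_stein_kernel_one_general (d : ℕ) (k : ℝ) (hk : 1 < k)
    (ν : Fin d → ℝ) (S : Matrix (Fin d) (Fin d) ℝ) (hS : S.PosDef) :
    ∀ x, ∀ i,
      (∑ j, fderiv ℝ (fun y =>
          ((dotProduct (y - ν) (S⁻¹.mulVec (y - ν)) + k) / ((d : ℝ) + k - 2)) * S i j *
            studentDensity d k ν S y) x (Pi.single j 1))
        = (ν i - x i) * studentDensity d k ν S x := by
  intro x i
  have hk0 : 0 < k := by linarith
  have hdk : (d : ℝ) + k - 2 ≠ 0 := by
    have : (1 : ℝ) ≤ d := by exact_mod_cast i.pos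
    linarith
  have hτ : ∀ j, (fun y =>
      ((dotProduct (y - ν) (S⁻¹.mulVec (y - ν)) + k) / ((d : ℝ) + k - 2)) * S i j *
        studentDensity d k ν S y)
      = fun y => S i j * k * studentConst d k S / (d + k - 2) *
          (1 + mahalanobisSq S⁻¹ ν y / k) ^ (1 - (k + d) / 2) := fun j => funext fun y => by
    have := mahalanobisSq_add_mul_studentDensity hk0 ν hS y
    unfold mahalanobisSq at this ⊢
    linear_combination (S i j / (d + k - 2)) * this
  have hSS : S *ᵥ (S⁻¹ *ᵥ (x - ν)) = x - ν := by
    rw [mulVec_mulVec, mul_nonsing_inv S (isUnit_iff_ne_zero.2 hS.det_pos.ne'), one_mulVec]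
  have hφ := hasFDerivAt_one_add_mahalanobisSq_div_rpow S⁻¹ ν (1 - (k + d) / 2)
    (one_add_mahalanobisSq_div_pos hS.inv.posSemidef hk0 ν x).ne'
  simp only [hτ, (hφ.const_mul _).fderiv, FunLike.coe_smul, Pi.smul_apply, smul_eq_mul,
    fderiv_mahalanobisSq_single (isHermitian_iff_isSymm.mp hS.inv.isHermitian)]
  rw [show 1 - (k + d) / 2 - 1 = -((k + d) / 2) by ring, studentDensity_eq]
  calc _ = studentConst d k S * (1 + mahalanobisSq S⁻¹ ν x / k) ^ (-((k + d) / 2)) *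
        ((2 - (k + d)) / (d + k - 2)) * (S *ᵥ (S⁻¹ *ᵥ (x - ν))) i := by
        rw [mulVec, dotProduct, Finset.mul_sum]
        exact Finset.sum_congr rfl fun j _ => by field_simp
    _ = _ := by
        rw [hSS, Pi.sub_apply]
        field_simp
        ring

/-- The matrix `τ₁(x) = ((x-ν)ᵀ S⁻¹ (x-ν) + k)/(d + k - 2) · S` is a Stein kernel
for the multivariate Student-t distribution with `k > 1`:
`div(τ₁ t_k)(x) = (ν - x) t_k(x)` (row-wise divergence). -/
theorem student_stein_kernel_one (d : ℕ) (hd : 1 ≤ d) (k : ℝ) (hk : 1 < k)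
    (ν : Fin d → ℝ) (S : Matrix (Fin d) (Fin d) ℝ) (hS : S.PosDef) :
    ∀ x, ∀ i,
      (∑ j, fderiv ℝ (fun y =>
          ((dotProduct (y - ν) (S⁻¹.mulVec (y - ν)) + k) / ((d : ℝ) + k - 2)) * S i j *
            studentDensity d k ν S y) x (Pi.single j 1))
        = (ν i - x i) * studentDensity d k ν S x :=
  student_stein_kernel_one_general d k hk ν S hS
end

section
/- If X ~ t_k(ν, Σ) with k > 2, then τ₂(x) = (1/(k-1)) ((x-ν)(x-ν)ᵀ + k Σ) is a Stein kernel for X, i.e. div(τ₂ · t_k)(x) = (ν - x) t_k(x) for all x. -/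
open MeasureTheory Real Matrix

/-! With `q(x) = (x - ν) ⬝ᵥ S⁻¹ (x - ν)`, the gradient of the density is
`∇t_k(x) = -(k + d) / (k + q(x)) · t_k(x) · S⁻¹ (x - ν)`. The product rule splits
`div(τ₂ t_k)` into `(div τ₂) t_k = (d + 1) / (k - 1) · (x - ν) t_k` and `τ₂ ∇t_k`; since
`τ₂(x) S⁻¹ (x - ν) = (k + q(x)) / (k - 1) · (x - ν)`, the factor `k + q(x)` cancels and the
second term is `-(k + d) / (k - 1) · (x - ν) t_k`. The two add up to `(ν - x) t_k`. -/

section Calculus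

variable {ι : Type*} [Fintype ι]

noncomputable def dotProductCLM (w : ι → ℝ) : (ι → ℝ) →L[ℝ] ℝ :=
  (dotProductBilin ℝ ℝ).toContinuousBilinearMap w

@[simp]
theorem dotProductCLM_apply (w v : ι → ℝ) : dotProductCLM w v = w ⬝ᵥ v := rfl

theorem hasFDerivAt_dotProduct_mulVec_sub {M : Matrix ι ι ℝ} (hM : M.IsSymm) (ν x : ι → ℝ) :
    HasFDerivAt (fun y => (y - ν) ⬝ᵥ M *ᵥ (y - ν))
      ((2 : ℝ) • dotProductCLM (M *ᵥ (x - ν))) x := by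
  have hsub : HasFDerivAt (fun y : ι → ℝ => y - ν) (ContinuousLinearMap.id ℝ _) x :=
    (hasFDerivAt_id x).sub_const ν
  have hmulVec := M.mulVecLin.toContinuousLinearMap.hasFDerivAt.comp x hsub
  refine ((dotProductBilin ℝ ℝ).toContinuousBilinearMap.hasFDerivAt_of_bilinear hsub
    hmulVec).congr_fderiv ?_
  ext v
  have hsymm : (x - ν) ⬝ᵥ M *ᵥ v = M *ᵥ (x - ν) ⬝ᵥ v := by
    rw [dotProduct_mulVec, ← mulVec_transpose, hM.eq]
  simp only [_root_.add_apply, ContinuousLinearMap.precompR_apply,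
    ContinuousLinearMap.compL_apply, ContinuousLinearMap.comp_apply,
    ContinuousLinearMap.precompL_apply, ContinuousLinearMap.id_apply,
    LinearMap.toContinuousBilinearMap_apply, dotProductBilin_apply_apply,
    LinearMap.coe_toContinuousLinearMap', Function.comp_apply, mulVecLin_apply,
    _root_.smul_apply, dotProductCLM_apply, smul_eq_mul, hsymm, dotProduct_comm v]
  ring

theorem sum_fderiv_mul_apply_single [DecidableEq ι] {τ : ι → (ι → ℝ) → ℝ} {f : (ι → ℝ) → ℝ}
    {x : ι → ℝ} (hτ : ∀ j, DifferentiableAt ℝ (τ j) x) (hf : DifferentiableAt ℝ f x) :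
    ∑ j, fderiv ℝ (fun y => τ j y * f y) x (Pi.single j 1)
      = (∑ j, fderiv ℝ (τ j) x (Pi.single j 1)) * f x
        + ∑ j, τ j x * fderiv ℝ f x (Pi.single j 1) := by
  simp only [fderiv_fun_mul (hτ _) hf, _root_.add_apply, _root_.smul_apply, smul_eq_mul,
    Finset.sum_mul, ← Finset.sum_add_distrib]
  exact Finset.sum_congr rfl fun j _ => by ring

end Calculus

theorem Matrix.PosDef.dotProduct_inv_mulVec_nonneg {ι : Type*} [Fintype ι] [DecidableEq ι]
    {S : Matrix ι ι ℝ} (hS : S.PosDef) (z : ι → ℝ) : 0 ≤ z ⬝ᵥ S⁻¹ *ᵥ z := by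
  simpa using hS.inv.posSemidef.dotProduct_mulVec_nonneg z

theorem hasFDerivAt_studentDensity {d : ℕ} {k : ℝ} (hk : 0 < k) (ν : Fin d → ℝ)
    {S : Matrix (Fin d) (Fin d) ℝ} (hS : S.PosDef) (x : Fin d → ℝ) :
    HasFDerivAt (studentDensity d k ν S)
      ((-(k + d) / (k + (x - ν) ⬝ᵥ S⁻¹ *ᵥ (x - ν)) * studentDensity d k ν S x) •
        dotProductCLM (S⁻¹ *ᵥ (x - ν))) x := by
  have hq := hasFDerivAt_dotProduct_mulVec_sub (isHermitian_iff_isSymm.mp hS.inv.isHermitian) ν x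
  have hg : 0 < 1 + (x - ν) ⬝ᵥ S⁻¹ *ᵥ (x - ν) / k := by
    have hq0 := hS.dotProduct_inv_mulVec_nonneg (x - ν)
    positivity
  have hg' : HasFDerivAt (fun y => 1 + (y - ν) ⬝ᵥ S⁻¹ *ᵥ (y - ν) / k)
      (k⁻¹ • (2 : ℝ) • dotProductCLM (S⁻¹ *ᵥ (x - ν))) x := by
    simpa only [div_eq_mul_inv] using (hq.mul_const k⁻¹).const_add 1
  refine ((hg'.rpow_const (Or.inl hg.ne')).const_mul _).congr_fderiv ?_
  ext v
  have hkq : k + (x - ν) ⬝ᵥ S⁻¹ *ᵥ (x - ν) = k * (1 + (x - ν) ⬝ᵥ S⁻¹ *ᵥ (x - ν) / k) := by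
    field_simp
  simp only [_root_.smul_apply, dotProductCLM_apply, smul_eq_mul, studentDensity,
    rpow_sub_one hg.ne', hkq]
  field_simp

section SteinKernel

variable {ι : Type*}

noncomputable def studentSteinKernel (k : ℝ) (ν : ι → ℝ) (S : Matrix ι ι ℝ) (y : ι → ℝ) :
    Matrix ι ι ℝ :=
  (1 / (k - 1)) • (vecMulVec (y - ν) (y - ν) + k • S)

variable [Fintype ι]

theorem hasFDerivAt_studentSteinKernel_apply (k : ℝ) (ν : ι → ℝ) (S : Matrix ι ι ℝ)
    (x : ι → ℝ) (i j : ι) :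
    HasFDerivAt (fun y => studentSteinKernel k ν S y i j)
      ((1 / (k - 1)) • ((x i - ν i) • ContinuousLinearMap.proj (R := ℝ) (φ := fun _ => ℝ) j
        + (x j - ν j) • ContinuousLinearMap.proj (R := ℝ) (φ := fun _ => ℝ) i)) x :=
  ((((hasFDerivAt_apply i x).sub_const (ν i)).mul
    ((hasFDerivAt_apply j x).sub_const (ν j))).add_const (k * S i j)).const_mul (1 / (k - 1))

variable [DecidableEq ι]

theorem sum_fderiv_studentSteinKernel_apply_single (k : ℝ) (ν : ι → ℝ) (S : Matrix ι ι ℝ)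
    (x : ι → ℝ) (i : ι) :
    ∑ j, fderiv ℝ (fun y => studentSteinKernel k ν S y i j) x (Pi.single j 1)
      = (Fintype.card ι + 1) / (k - 1) * (x i - ν i) := by
  simp only [(hasFDerivAt_studentSteinKernel_apply k ν S x i _).fderiv, one_div, smul_add,
    _root_.add_apply, _root_.smul_apply, ContinuousLinearMap.proj_apply, Pi.single_eq_same,
    smul_eq_mul, mul_one, Pi.single_apply, mul_ite, mul_zero, Finset.sum_add_distrib,
    Finset.sum_const, Finset.card_univ, nsmul_eq_mul, Finset.sum_ite_eq, Finset.mem_univ,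
    ↓reduceIte]
  ring

theorem studentSteinKernel_mulVec_inv_mulVec {S : Matrix ι ι ℝ} (hS : IsUnit S.det) (k : ℝ)
    (ν x : ι → ℝ) :
    studentSteinKernel k ν S x *ᵥ (S⁻¹ *ᵥ (x - ν))
      = ((k + (x - ν) ⬝ᵥ S⁻¹ *ᵥ (x - ν)) / (k - 1)) • (x - ν) := by
  rw [studentSteinKernel, smul_mulVec, add_mulVec, vecMulVec_mulVec, smul_mulVec, mulVec_mulVec,
    mul_nonsing_inv S hS, one_mulVec, op_smul_eq_smul, ← add_smul, smul_smul]
  congr 1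
  ring

end SteinKernel

theorem sum_studentSteinKernel_mul_fderiv_studentDensity {d : ℕ} {k : ℝ} (hk : 1 < k)
    (ν : Fin d → ℝ) {S : Matrix (Fin d) (Fin d) ℝ} (hS : S.PosDef) (x : Fin d → ℝ) (i : Fin d) :
    ∑ j, studentSteinKernel k ν S x i j * fderiv ℝ (studentDensity d k ν S) x (Pi.single j 1)
      = -(k + d) / (k - 1) * (x i - ν i) * studentDensity d k ν S x := by
  have hf := hasFDerivAt_studentDensity (by linarith) ν hS x
  have hgrad : ∑ j, studentSteinKernel k ν S x i j *
      fderiv ℝ (studentDensity d k ν S) x (Pi.single j 1)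
      = (-(k + d) / (k + (x - ν) ⬝ᵥ S⁻¹ *ᵥ (x - ν)) * studentDensity d k ν S x) *
        (studentSteinKernel k ν S x *ᵥ (S⁻¹ *ᵥ (x - ν))) i := by
    simp only [hf.fderiv, _root_.smul_apply, dotProductCLM_apply, dotProduct_single_one,
      smul_eq_mul, mul_left_comm _ (_ * studentDensity d k ν S x), ← Finset.mul_sum]
    rfl
  rw [hgrad, studentSteinKernel_mulVec_inv_mulVec hS.det_pos.ne'.isUnit]
  have hk1 : k - 1 ≠ 0 := by linarith
  have hkq : k + (x - ν) ⬝ᵥ S⁻¹ *ᵥ (x - ν) ≠ 0 := by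
    have hq := hS.dotProduct_inv_mulVec_nonneg (x - ν)
    positivity
  simp only [Pi.smul_apply, Pi.sub_apply, smul_eq_mul]
  field_simp

theorem student_stein_kernel_two_general (d : ℕ) (k : ℝ) (hk : 2 < k)
    (ν : Fin d → ℝ) (S : Matrix (Fin d) (Fin d) ℝ) (hS : S.PosDef) :
    ∀ x, ∀ i,
      (∑ j, fderiv ℝ (fun y =>
          (1 / (k - 1)) * ((y i - ν i) * (y j - ν j) + k * S i j) *
            studentDensity d k ν S y) x (Pi.single j 1))
        = (ν i - x i) * studentDensity d k ν S x := by
  intro x i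
  have hf := hasFDerivAt_studentDensity (by linarith) ν hS x
  change ∑ j, fderiv ℝ (fun y => studentSteinKernel k ν S y i j * studentDensity d k ν S y) x
    (Pi.single j 1) = _
  rw [sum_fderiv_mul_apply_single
      (fun j => (hasFDerivAt_studentSteinKernel_apply k ν S x i j).differentiableAt)
      hf.differentiableAt, sum_fderiv_studentSteinKernel_apply_single,
    sum_studentSteinKernel_mul_fderiv_studentDensity (by linarith) ν hS x i, Fintype.card_fin]
  have hk1 : k - 1 ≠ 0 := by linarith
  field_simp
  ring

/-- The matrix `τ₂(x) = (1/(k-1)) ((x-ν)(x-ν)ᵀ + k S)` is a Stein kernel for the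
multivariate Student-t distribution with `k > 2`:
`div(τ₂ t_k)(x) = (ν - x) t_k(x)` (row-wise divergence). -/
theorem student_stein_kernel_two (d : ℕ) (hd : 1 ≤ d) (k : ℝ) (hk : 2 < k)
    (ν : Fin d → ℝ) (S : Matrix (Fin d) (Fin d) ℝ) (hS : S.PosDef) :
    ∀ x, ∀ i,
      (∑ j, fderiv ℝ (fun y =>
          (1 / (k - 1)) * ((y i - ν i) * (y j - ν j) + k * S i j) *
            studentDensity d k ν S y) x (Pi.single j 1))
        = (ν i - x i) * studentDensity d k ν S x :=
  student_stein_kernel_two_general d k hk ν S hS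
end

section
/- Let p : ℝ⁺ be an elliptical density E_d(ν, Σ, φ) with φ C¹ and positive on (0,∞) and ∫₀^∞ φ < ∞. Then the matrix τ₁(x) = (1/φ(t)) ∫_t^∞ φ(u) du · Σ, with t = (x-ν)ᵀΣ⁻¹(x-ν)/2, satisfies div(τ₁ p)(x) = (ν - x) p(x) for all x with p(x) > 0. -/
/-!
Write `t(y) = (y - ν)ᵀ S⁻¹ (y - ν) / 2`, `c = κ |S|^{-1/2}` and `Φ(s) = ∫_s^∞ φ`. Near a point
where `p > 0`, `φ(t)` does not vanish (at `y = ν` by `p > 0` itself, elsewhere because `t > 0`),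
so the entries of `τ₁ p` are `c S_ij Φ(t(y))`. Away from `ν` we have `t > 0`, `Φ'(t) = -φ(t)` and
`∂_j t = (S⁻¹ (x - ν))_j`, so the divergence is `-c φ(t) S S⁻¹ (x - ν) = (ν - x) p(x)`. At `x = ν`
every `y ↦ G(t(y))` is even about `ν`, so its Fréchet derivative there vanishes; this needs no
regularity of `Φ` at `0`, since a non-differentiable function also has `fderiv = 0`.
-/

open MeasureTheory Matrix Set Filter Topology

theorem hasDerivAt_setIntegral_Ioi {E : Type*} [NormedAddCommGroup E] [NormedSpace ℝ E]
    [CompleteSpace E] {f : ℝ → E} {a b : ℝ}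
    (hf : IntegrableOn f (Ioi a)) (hab : a < b) (hb : ContinuousAt f b) :
    HasDerivAt (fun s => ∫ x in Ioi s, f x) (-f b) b := by
  have hba : IntervalIntegrable f volume b a :=
    intervalIntegrable_iff.2 (hf.mono_set (by simp [uIoc_of_ge hab.le, Ioc_subset_Ioi_self]))
  have hmeas : StronglyMeasurableAtFilter f (𝓝 b) :=
    AEStronglyMeasurable.stronglyMeasurableAtFilter_of_mem hf.aestronglyMeasurable
      (Ioi_mem_nhds hab)
  refine ((intervalIntegral.integral_hasDerivAt_left hba hmeas hb).add_const
    (∫ x in Ioi a, f x)).congr_of_eventuallyEq ?_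
  filter_upwards [Ioi_mem_nhds hab] with s hs
  exact (intervalIntegral.integral_interval_add_Ioi
    (hf.mono_set (Ioi_subset_Ioi (le_of_lt hs))) hf).symm

theorem fderiv_eq_zero_of_forall_sub_eq_add {E F : Type*} [NormedAddCommGroup E]
    [NormedSpace ℝ E] [NormedAddCommGroup F] [NormedSpace ℝ F] {f : E → F} {a : E}
    (h : ∀ v, f (a - v) = f (a + v)) : fderiv ℝ f a = 0 := by
  set g : E → F := fun v => f (a + v)
  have hg : g ∘ ContinuousLinearEquiv.neg ℝ = g :=
    funext fun v => by simp [g, ← sub_eq_add_neg, h]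
  have hcomp := (ContinuousLinearEquiv.neg ℝ (M := E)).comp_right_fderiv (f := g) (x := 0)
  rw [hg] at hcomp
  ext v
  have hodd : fderiv ℝ g 0 v = -fderiv ℝ g 0 v := by
    simpa using congrArg (fun L : E →L[ℝ] F => L v) hcomp
  have htwice : (2 : ℝ) • fderiv ℝ g 0 v = 0 := by
    rw [two_smul]
    nth_rw 1 [hodd]
    exact neg_add_cancel _
  simpa [g, fderiv_comp_add_left] using (smul_eq_zero.1 htwice).resolve_left two_ne_zero

theorem eventually_eq_or_ne_nhds {X : Type*} [TopologicalSpace X] [T1Space X] (x a : X) :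
    ∀ᶠ y in 𝓝 x, y = x ∨ y ≠ a := by
  rcases eq_or_ne x a with rfl | hxa
  · exact Eventually.of_forall fun y => em _
  · exact (eventually_ne_nhds hxa).mono fun y => Or.inr

namespace Matrix

variable {n : Type*} [Fintype n]

theorem IsSymm.dotProduct_mulVec_comm {R : Type*} [CommSemiring R] {A : Matrix n n R}
    (hA : A.IsSymm) (v w : n → R) : v ⬝ᵥ A *ᵥ w = w ⬝ᵥ A *ᵥ v := by
  rw [dotProduct_mulVec, dotProduct_comm, ← mulVec_transpose, hA.eq]

theorem fderiv_comp_quadForm_div_two_center {F : Type*} [NormedAddCommGroup F]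
    [NormedSpace ℝ F] (A : Matrix n n ℝ) (ν : n → ℝ) (G : ℝ → F) :
    fderiv ℝ (fun y => G ((y - ν) ⬝ᵥ A *ᵥ (y - ν) / 2)) ν = 0 :=
  fderiv_eq_zero_of_forall_sub_eq_add fun v => by simp [mulVec_neg]

theorem PosDef.quadForm_div_two_pos {A : Matrix n n ℝ} (hA : A.PosDef) {ν y : n → ℝ}
    (hy : y ≠ ν) : 0 < (y - ν) ⬝ᵥ A *ᵥ (y - ν) / 2 :=
  half_pos (by simpa using hA.dotProduct_mulVec_pos (sub_ne_zero.2 hy))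

variable [DecidableEq n]

theorem IsSymm.hasFDerivAt_quadForm_div_two {A : Matrix n n ℝ} (hA : A.IsSymm)
    (ν x : n → ℝ) :
    HasFDerivAt (fun y => (y - ν) ⬝ᵥ A *ᵥ (y - ν) / 2)
      (LinearMap.toContinuousLinearMap (toLinearMap₂' ℝ A (x - ν))) x := by
  let B : (n → ℝ) →L[ℝ] (n → ℝ) →L[ℝ] ℝ := LinearMap.toContinuousLinearMap
    (LinearMap.toContinuousLinearMap.toLinearMap ∘ₗ toLinearMap₂' ℝ A)
  have hsub : HasFDerivAt (fun y : n → ℝ => y - ν) (ContinuousLinearMap.id ℝ _) x :=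
    (hasFDerivAt_id x).sub_const ν
  refine (((B.hasFDerivAt_of_bilinear hsub hsub).mul_const (2⁻¹ : ℝ)).congr_fderiv ?_)
    |>.congr_of_eventuallyEq (Eventually.of_forall fun y => ?_)
  · ext h
    simp [B, toLinearMap₂'_apply', hA.dotProduct_mulVec_comm h]
    ring
  · simp [B, toLinearMap₂'_apply', div_eq_mul_inv]

theorem IsSymm.fderiv_comp_quadForm_div_two_apply_single {A : Matrix n n ℝ} (hA : A.IsSymm)
    {ν x : n → ℝ} {G : ℝ → ℝ} {G' : ℝ}
    (hG : HasDerivAt G G' ((x - ν) ⬝ᵥ A *ᵥ (x - ν) / 2)) (j : n) :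
    fderiv ℝ (fun y => G ((y - ν) ⬝ᵥ A *ᵥ (y - ν) / 2)) x (Pi.single j 1)
      = G' * (A *ᵥ (x - ν)) j := by
  have hcomp : HasFDerivAt (fun y => G ((y - ν) ⬝ᵥ A *ᵥ (y - ν) / 2))
      (G' • LinearMap.toContinuousLinearMap (toLinearMap₂' ℝ A (x - ν))) x :=
    hG.comp_hasFDerivAt x (hA.hasFDerivAt_quadForm_div_two ν x)
  rw [hcomp.fderiv]
  change G' * toLinearMap₂' ℝ A (x - ν) (Pi.single j 1) = _
  rw [toLinearMap₂'_apply', hA.dotProduct_mulVec_comm, single_one_dotProduct]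

theorem IsSymm.sum_fderiv_mul_comp_quadForm_inv_div_two {S : Matrix n n ℝ} (hS : S.IsSymm)
    (hdet : IsUnit S.det) {ν x : n → ℝ} {G : ℝ → ℝ} {G' : ℝ}
    (hG : HasDerivAt G G' ((x - ν) ⬝ᵥ S⁻¹ *ᵥ (x - ν) / 2)) (i : n) :
    ∑ j, fderiv ℝ (fun y => S i j * G ((y - ν) ⬝ᵥ S⁻¹ *ᵥ (y - ν) / 2)) x (Pi.single j 1)
      = G' * (x - ν) i :=
  calc _ = ∑ j, S i j * G' * (S⁻¹ *ᵥ (x - ν)) j :=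
        Finset.sum_congr rfl fun j _ =>
          hS.inv.fderiv_comp_quadForm_div_two_apply_single (hG.const_mul (S i j)) j
    _ = G' * (S *ᵥ S⁻¹ *ᵥ (x - ν)) i := by
        simp only [mulVec, dotProduct, Finset.mul_sum]
        exact Finset.sum_congr rfl fun j _ => Finset.sum_congr rfl fun k _ => by ring
    _ = G' * (x - ν) i := by rw [mulVec_mulVec, mul_nonsing_inv _ hdet, one_mulVec]

end Matrix

theorem elliptical_stein_kernel_general (d : ℕ) (ν : Fin d → ℝ)
    (S : Matrix (Fin d) (Fin d) ℝ) (hS : S.PosDef)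
    (κ : ℝ) (φ : ℝ → ℝ)
    (hφpos : ∀ t ∈ Set.Ioi (0 : ℝ), 0 < φ t)
    (hφC1 : ContDiffOn ℝ 1 φ (Set.Ioi 0))
    (hφint : IntegrableOn φ (Set.Ioi 0))
    (p : (Fin d → ℝ) → ℝ)
    (hp : ∀ x, p x = κ * S.det ^ (-(1 : ℝ) / 2) *
      φ (dotProduct (x - ν) (S⁻¹.mulVec (x - ν)) / 2)) :
    ∀ x, 0 < p x → ∀ i,
      (∑ j, fderiv ℝ (fun y =>
          (1 / φ (dotProduct (y - ν) (S⁻¹.mulVec (y - ν)) / 2)) *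
            (∫ u in Set.Ioi (dotProduct (y - ν) (S⁻¹.mulVec (y - ν)) / 2), φ u) *
            S i j * p y) x (Pi.single j 1))
        = (ν i - x i) * p x := by
  intro x hpx i
  set c := κ * S.det ^ (-(1 : ℝ) / 2)
  set t : (Fin d → ℝ) → ℝ := fun y => (y - ν) ⬝ᵥ S⁻¹ *ᵥ (y - ν) / 2
  set G : ℝ → ℝ := fun s => c * ∫ u in Ioi s, φ u
  have hpt : ∀ y, p y = c * φ (t y) := hp
  have hφt_ne : ∀ᶠ y in 𝓝 x, φ (t y) ≠ 0 := by
    filter_upwards [eventually_eq_or_ne_nhds x ν] with y hy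
    rcases hy with rfl | hy
    exacts [right_ne_zero_of_mul (hpt y ▸ hpx.ne'), (hφpos _ (hS.inv.quadForm_div_two_pos hy)).ne']
  have hsummand : ∀ j, fderiv ℝ (fun y => 1 / φ (t y) * (∫ u in Ioi (t y), φ u) * S i j * p y) x
      = fderiv ℝ (fun y => S i j * G (t y)) x := fun j => by
    refine EventuallyEq.fderiv_eq ?_
    filter_upwards [hφt_ne] with y hy
    rw [hpt y]
    simp only [G]
    field_simp
  show ∑ j, fderiv ℝ (fun y => 1 / φ (t y) * (∫ u in Ioi (t y), φ u) * S i j * p y) x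
    (Pi.single j 1) = _
  simp only [hsummand]
  rcases eq_or_ne x ν with rfl | hx
  · have hcenter : ∀ j, fderiv ℝ (fun y => S i j * G (t y)) x = 0 := fun j =>
      fderiv_comp_quadForm_div_two_center S⁻¹ x (fun s => S i j * G s)
    simp [hcenter]
  have htx : 0 < t x := hS.inv.quadForm_div_two_pos hx
  have hG : HasDerivAt G (c * -φ (t x)) (t x) :=
    (hasDerivAt_setIntegral_Ioi hφint htx
      (hφC1.continuousOn.continuousAt (Ioi_mem_nhds htx))).const_mul c
  rw [(isHermitian_iff_isSymm.1 hS.isHermitian).sum_fderiv_mul_comp_quadForm_inv_div_two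
    (isUnit_iff_ne_zero.2 hS.det_pos.ne') hG, hpt x, Pi.sub_apply]
  ring

/-- For an elliptical density `p(x) = κ|S|^{-1/2} φ(t)` with `t = (x-ν)ᵀS⁻¹(x-ν)/2`,
`φ` being `C¹`, positive and integrable on `(0,∞)`, the matrix
`τ₁(x) = (1/φ(t)) ∫_t^∞ φ(u) du · S` satisfies `div(τ₁ p)(x) = (ν - x) p(x)`
(row-wise divergence) wherever `p(x) > 0`. -/
theorem elliptical_stein_kernel (d : ℕ) (ν : Fin d → ℝ)
    (S : Matrix (Fin d) (Fin d) ℝ) (hS : S.PosDef)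
    (κ : ℝ) (hκ : 0 < κ) (φ : ℝ → ℝ)
    (hφpos : ∀ t ∈ Set.Ioi (0 : ℝ), 0 < φ t)
    (hφC1 : ContDiffOn ℝ 1 φ (Set.Ioi 0))
    (hφint : IntegrableOn φ (Set.Ioi 0))
    (p : (Fin d → ℝ) → ℝ)
    (hp : ∀ x, p x = κ * S.det ^ (-(1 : ℝ) / 2) *
      φ (dotProduct (x - ν) (S⁻¹.mulVec (x - ν)) / 2)) :
    ∀ x, 0 < p x → ∀ i,
      (∑ j, fderiv ℝ (fun y =>
          (1 / φ (dotProduct (y - ν) (S⁻¹.mulVec (y - ν)) / 2)) *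
            (∫ u in Set.Ioi (dotProduct (y - ν) (S⁻¹.mulVec (y - ν)) / 2), φ u) *
            S i j * p y) x (Pi.single j 1))
        = (ν i - x i) * p x :=
  elliptical_stein_kernel_general d ν S hS κ φ hφpos hφC1 hφint p hp
end

section
/- Let φ : (0,∞) → (0,∞) be C¹ and let a, b : (0,∞) → ℝ be C¹ functions satisfying (a(t)φ(t))'/φ(t) + 2t (b(t)φ(t))'/φ(t) + (d+1) b(t) + 1 = 0 for all t > 0. Then for the spherical density p(x) = κ φ(|x|²/2) on ℝ^d, the matrix τ(x) = a(t) I_d + b(t) x xᵀ with t = |x|²/2 satisfies div(τ p)(x) = -x p(x) for all x ≠ 0. -/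
open MeasureTheory Real Matrix

/-!
With `t = |x|²/2`, `A = aφ` and `B = bφ`, the field `τ p` is `κ (A(t) I + B(t) x xᵀ)`. Since
`∇t = x`, its row divergence is `κ (A'(t) x + B'(t) (x xᵀ) x + B(t) div(x xᵀ))
= κ (A'(t) + 2t B'(t) + (d+1) B(t)) x`, and the hypothesis on `a, b`, multiplied by `φ(t)`,
says exactly that the bracket equals `-φ(t)`.
-/

section RadialCalculus

variable {ι : Type*} [Fintype ι]

noncomputable def halfSqNorm (y : ι → ℝ) : ℝ := (∑ l, y l ^ 2) / 2

theorem halfSqNorm_pos {x : ι → ℝ} (hx : x ≠ 0) : 0 < halfSqNorm x := by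
  obtain ⟨l, hl⟩ := Function.ne_iff.mp hx
  have : 0 < ∑ l, x l ^ 2 :=
    Finset.sum_pos' (fun _ _ => sq_nonneg _) ⟨l, Finset.mem_univ l, pow_two_pos_of_ne_zero hl⟩
  unfold halfSqNorm
  positivity

theorem sum_mul_self_eq_two_mul_halfSqNorm (x : ι → ℝ) :
    ∑ l, x l * x l = 2 * halfSqNorm x := by
  simp only [halfSqNorm, ← pow_two]
  ring

theorem hasFDerivAt_halfSqNorm (x : ι → ℝ) :
    HasFDerivAt halfSqNorm
      (∑ l, x l • ContinuousLinearMap.proj (R := ℝ) (φ := fun _ : ι => ℝ) l) x := by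
  have h := (HasFDerivAt.fun_sum (u := Finset.univ) fun l _ =>
    (hasFDerivAt_apply (𝕜 := ℝ) l x).pow 2).mul_const (2⁻¹ : ℝ)
  refine h.congr_fderiv ?_
  ext v
  simp only [Nat.add_one_sub_one, pow_one, nsmul_eq_mul, Nat.cast_ofNat, _root_.smul_apply,
    _root_.sum_apply, ContinuousLinearMap.proj_apply, smul_eq_mul, Finset.mul_sum]
  exact Finset.sum_congr rfl fun _ _ => by ring

variable [DecidableEq ι]

noncomputable def rowDiv (τ : (ι → ℝ) → Matrix ι ι ℝ) (x : ι → ℝ) (i : ι) : ℝ :=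
  ∑ j, fderiv ℝ (fun y => τ y i j) x (Pi.single j 1)

theorem rowDiv_const_smul {τ : (ι → ℝ) → Matrix ι ι ℝ} {x : ι → ℝ} (i : ι)
    (hτ : ∀ j, DifferentiableAt ℝ (fun y => τ y i j) x) (c : ℝ) :
    rowDiv (fun y => c • τ y) x i = c * rowDiv τ x i := by
  rw [rowDiv, rowDiv, Finset.mul_sum]
  refine Finset.sum_congr rfl fun j _ => ?_
  simp only [Matrix.smul_apply, smul_eq_mul]
  rw [fderiv_const_mul (hτ j)]
  rfl

noncomputable def sphericalKernel (A B : ℝ → ℝ) (y : ι → ℝ) : Matrix ι ι ℝ :=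
  A (halfSqNorm y) • 1 + B (halfSqNorm y) • vecMulVec y y

theorem hasFDerivAt_sphericalKernel_apply {A B : ℝ → ℝ} {x : ι → ℝ}
    (hA : DifferentiableAt ℝ A (halfSqNorm x)) (hB : DifferentiableAt ℝ B (halfSqNorm x))
    (i j : ι) :
    HasFDerivAt (fun y => sphericalKernel A B y i j)
      ((deriv A (halfSqNorm x) * (1 : Matrix ι ι ℝ) i j +
            deriv B (halfSqNorm x) * (x i * x j)) •
          ∑ l, x l • ContinuousLinearMap.proj (R := ℝ) (φ := fun _ : ι => ℝ) l +
        B (halfSqNorm x) •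
          (x i • ContinuousLinearMap.proj j + x j • ContinuousLinearMap.proj i)) x := by
  have hAt := hA.hasDerivAt.comp_hasFDerivAt x (hasFDerivAt_halfSqNorm x)
  have hBt := hB.hasDerivAt.comp_hasFDerivAt x (hasFDerivAt_halfSqNorm x)
  have hxx := (hasFDerivAt_apply (𝕜 := ℝ) i x).mul (hasFDerivAt_apply (𝕜 := ℝ) j x)
  refine ((hAt.mul_const ((1 : Matrix ι ι ℝ) i j)).add (hBt.mul hxx)).congr_fderiv ?_
  ext v
  simp only [Function.comp_apply, smul_add, Pi.mul_apply, _root_.add_apply, _root_.smul_apply,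
    _root_.sum_apply, ContinuousLinearMap.proj_apply, smul_eq_mul]
  ring

theorem rowDiv_sphericalKernel {A B : ℝ → ℝ} {x : ι → ℝ}
    (hA : DifferentiableAt ℝ A (halfSqNorm x)) (hB : DifferentiableAt ℝ B (halfSqNorm x))
    (i : ι) :
    rowDiv (sphericalKernel A B) x i =
      (deriv A (halfSqNorm x) + 2 * halfSqNorm x * deriv B (halfSqNorm x) +
        (Fintype.card ι + 1) * B (halfSqNorm x)) * x i := by
  simp only [rowDiv, (hasFDerivAt_sphericalKernel_apply hA hB i _).fderiv, Matrix.one_apply,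
    mul_ite, mul_one, mul_zero, smul_add, _root_.add_apply, _root_.smul_apply, _root_.sum_apply,
    ContinuousLinearMap.proj_apply, Pi.single_apply, smul_eq_mul, Finset.sum_ite_eq',
    Finset.mem_univ, ↓reduceIte]
  set t := halfSqNorm x
  have hsummand : ∀ l, ((if i = l then deriv A t else 0) + deriv B t * (x i * x l)) * x l +
      (B t * x i + if i = l then B t * x l else 0) =
      (if i = l then (deriv A t + B t) * x l else 0) + deriv B t * x i * (x l * x l) +
        B t * x i := by
    intro l
    split_ifs <;> ring
  rw [Finset.sum_congr rfl fun l _ => hsummand l, Finset.sum_add_distrib, Finset.sum_add_distrib,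
    Finset.sum_ite_eq, ← Finset.mul_sum, sum_mul_self_eq_two_mul_halfSqNorm, Finset.sum_const,
    Finset.card_univ, nsmul_eq_mul]
  simp only [Finset.mem_univ, if_true]
  ring

end RadialCalculus

theorem spherical_stein_kernel_ab_general (d : ℕ) (κ : ℝ)
    (φ a b : ℝ → ℝ)
    (hφpos : ∀ t ∈ Set.Ioi (0 : ℝ), 0 < φ t)
    (hφC1 : ContDiffOn ℝ 1 φ (Set.Ioi 0))
    (haC1 : ContDiffOn ℝ 1 a (Set.Ioi 0))
    (hbC1 : ContDiffOn ℝ 1 b (Set.Ioi 0))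
    (hrel : ∀ t ∈ Set.Ioi (0 : ℝ),
      deriv (fun s => a s * φ s) t / φ t + 2 * t * (deriv (fun s => b s * φ s) t / φ t) +
        ((d : ℝ) + 1) * b t + 1 = 0)
    (p : (Fin d → ℝ) → ℝ)
    (hp : ∀ x, p x = κ * φ ((∑ i, x i ^ 2) / 2)) :
    ∀ x : Fin d → ℝ, x ≠ 0 → ∀ i,
      (∑ j, fderiv ℝ (fun y =>
          (a ((∑ l, y l ^ 2) / 2) * (1 : Matrix (Fin d) (Fin d) ℝ) i j +
            b ((∑ l, y l ^ 2) / 2) * (y i * y j)) * p y) x (Pi.single j 1))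
        = -(x i) * p x := by
  intro x hx i
  set t := halfSqNorm x
  set A : ℝ → ℝ := fun s => a s * φ s
  set B : ℝ → ℝ := fun s => b s * φ s
  have ht : Set.Ioi (0 : ℝ) ∈ nhds t := isOpen_Ioi.mem_nhds (halfSqNorm_pos hx)
  have hdiff : ∀ f : ℝ → ℝ, ContDiffOn ℝ 1 f (Set.Ioi 0) → DifferentiableAt ℝ f t :=
    fun f hf => (hf.differentiableOn one_ne_zero).differentiableAt ht
  have hA : DifferentiableAt ℝ A t := (hdiff a haC1).fun_mul (hdiff φ hφC1)
  have hB : DifferentiableAt ℝ B t := (hdiff b hbC1).fun_mul (hdiff φ hφC1)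
  have hODE : deriv A t + 2 * t * deriv B t + ((d : ℝ) + 1) * B t = -φ t := by
    have h := hrel t (halfSqNorm_pos hx)
    field_simp [(hφpos t (halfSqNorm_pos hx)).ne'] at h
    linarith
  have hτp : ∀ j, (fun y => (a ((∑ l, y l ^ 2) / 2) * (1 : Matrix (Fin d) (Fin d) ℝ) i j +
      b ((∑ l, y l ^ 2) / 2) * (y i * y j)) * p y) =
      fun y => (κ • sphericalKernel A B y) i j := by
    intro j
    funext y
    simp only [A, B, hp, sphericalKernel, halfSqNorm, Matrix.smul_apply, Matrix.add_apply,
      smul_eq_mul, vecMulVec_apply]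
    ring
  have hτ j : DifferentiableAt ℝ (fun y => sphericalKernel A B y i j) x :=
    (hasFDerivAt_sphericalKernel_apply hA hB i j).differentiableAt
  calc _ = rowDiv (fun y => κ • sphericalKernel A B y) x i := by
        simp only [hτp]
        rfl
    _ = κ * ((deriv A t + 2 * t * deriv B t + ((d : ℝ) + 1) * B t) * x i) := by
        rw [rowDiv_const_smul i hτ, rowDiv_sphericalKernel hA hB, Fintype.card_fin]
    _ = -(x i) * p x := by rw [hODE, show p x = κ * φ t from hp x]; ring

/-- If `a, b` are `C¹` on `(0,∞)` and satisfy
`(aφ)'/φ + 2t (bφ)'/φ + (d+1) b + 1 = 0` on `(0,∞)`, then for the spherical density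
`p(x) = κ φ(|x|²/2)`, the matrix `τ(x) = a(t) I_d + b(t) x xᵀ` (with `t = |x|²/2`)
satisfies `div(τ p)(x) = -x p(x)` for all `x ≠ 0` (row-wise divergence). -/
theorem spherical_stein_kernel_ab (d : ℕ) (κ : ℝ) (hκ : 0 < κ)
    (φ a b : ℝ → ℝ)
    (hφpos : ∀ t ∈ Set.Ioi (0 : ℝ), 0 < φ t)
    (hφC1 : ContDiffOn ℝ 1 φ (Set.Ioi 0))
    (haC1 : ContDiffOn ℝ 1 a (Set.Ioi 0))
    (hbC1 : ContDiffOn ℝ 1 b (Set.Ioi 0))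
    (hrel : ∀ t ∈ Set.Ioi (0 : ℝ),
      deriv (fun s => a s * φ s) t / φ t + 2 * t * (deriv (fun s => b s * φ s) t / φ t) +
        ((d : ℝ) + 1) * b t + 1 = 0)
    (p : (Fin d → ℝ) → ℝ)
    (hp : ∀ x, p x = κ * φ ((∑ i, x i ^ 2) / 2)) :
    ∀ x : Fin d → ℝ, x ≠ 0 → ∀ i,
      (∑ j, fderiv ℝ (fun y =>
          (a ((∑ l, y l ^ 2) / 2) * (1 : Matrix (Fin d) (Fin d) ℝ) i j +
            b ((∑ l, y l ^ 2) / 2) * (y i * y j)) * p y) x (Pi.single j 1))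
        = -(x i) * p x :=
  spherical_stein_kernel_ab_general d κ φ a b hφpos hφC1 haC1 hbC1 hrel p hp
end

section
/- Let φ : (0,∞) → (0,∞) be continuous with ∫₀^∞ u^{(d-1)/2} φ(u) du < ∞ and let p(x) = κ φ(t) be a spherical density on ℝ^d with t = |x|²/2. Then b(t) = (t^{-(d+1)/2}/(2φ(t))) ∫_t^∞ u^{(d-1)/2} φ(u) du solves (bφ)'(t) + ((d+1)/(2t)) b(t)φ(t) = -φ(t)/(2t), and hence τ(x) = b(t) x xᵀ satisfies div(τ p)(x) = -x p(x) for x ≠ 0. -/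
/-!
With `k = (d+1)/2` and `F(t) = ∫_t^∞ u^{k-1} φ(u) du`, the product `b φ` is `t^{-k} F(t) / 2`,
so `F' = -t^{k-1} φ` gives `(bφ)' = -(k/t) bφ - φ/(2t)`, which is the ODE.
For a radial profile `g`, the row divergence of `y ↦ g(|y|²/2) y yᵀ` at `x` is
`x (2t g'(t) + (d+1) g(t))` with `t = |x|²/2`; for `g = κ bφ` the ODE turns this into
`-x κ φ(t) = -x p(x)`.
-/

open MeasureTheory Real Set Filter Topology

theorem hasDerivAt_integral_Ioi {E : Type*} [NormedAddCommGroup E] [NormedSpace ℝ E]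
    [CompleteSpace E] {f : ℝ → E} {a t : ℝ} (hat : a < t) (hf : IntegrableOn f (Ioi a))
    (hft : ContinuousAt f t) :
    HasDerivAt (fun s => ∫ u in Ioi s, f u) (-f t) t := by
  have htail : (fun s => ∫ u in Ioi s, f u) =ᶠ[𝓝 t]
      fun s => (∫ u in Ioi a, f u) - ∫ u in a..s, f u := by
    filter_upwards [Ioi_mem_nhds hat] with s hs
    rw [← intervalIntegral.integral_Ioi_sub_Ioi hf hs.le, sub_sub_cancel]
  have hmeas : StronglyMeasurableAtFilter f (𝓝 t) :=
    AEStronglyMeasurable.stronglyMeasurableAtFilter_of_mem hf.aestronglyMeasurable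
      (Ioi_mem_nhds hat)
  have hint : IntervalIntegrable f volume a t :=
    (intervalIntegrable_iff_integrableOn_Ioc_of_le hat.le).2 (hf.mono_set Ioc_subset_Ioi_self)
  exact ((intervalIntegral.integral_hasDerivAt_right hint hmeas hft).const_sub _)
    |>.congr_of_eventuallyEq htail

theorem hasDerivAt_rpow_neg_mul_integral_Ioi {k t : ℝ} {φ : ℝ → ℝ} (ht : 0 < t)
    (hint : IntegrableOn (fun u => u ^ (k - 1) * φ u) (Ioi 0)) (hφ : ContinuousAt φ t) :
    HasDerivAt (fun s => s ^ (-k) / 2 * ∫ u in Ioi s, u ^ (k - 1) * φ u)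
      (-(k / t) * (t ^ (-k) / 2 * ∫ u in Ioi t, u ^ (k - 1) * φ u) - φ t / (2 * t)) t := by
  have hpow : HasDerivAt (fun s : ℝ => s ^ (-k) / 2) (-k * t ^ (-k - 1) / 2) t :=
    (hasDerivAt_rpow_const (Or.inl ht.ne')).div_const 2
  have hcont : ContinuousAt (fun u => u ^ (k - 1) * φ u) t :=
    (continuousAt_id.rpow_const (Or.inl ht.ne')).mul hφ
  refine (hpow.mul (hasDerivAt_integral_Ioi ht hint hcont)).congr_deriv ?_
  have hpred : t ^ (-k - 1) = t ^ (-k) / t := by rw [rpow_sub ht, rpow_one]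
  have hcancel : t ^ (-k) * t ^ (k - 1) * t = 1 := by
    rw [← rpow_add ht, show -k + (k - 1) = -1 by ring, rpow_neg_one, inv_mul_cancel₀ ht.ne']
  rw [hpred]
  field_simp
  linear_combination (-φ t) * hcancel

theorem hasDerivAt_mul_of_eq_tail_integral {k t : ℝ} {φ b : ℝ → ℝ}
    (hφpos : ∀ s ∈ Ioi (0 : ℝ), 0 < φ s) (hφcont : ContinuousOn φ (Ioi 0))
    (hint : IntegrableOn (fun u => u ^ (k - 1) * φ u) (Ioi 0))
    (hb : ∀ s, b s = s ^ (-k) / (2 * φ s) * ∫ u in Ioi s, u ^ (k - 1) * φ u) (ht : 0 < t) :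
    HasDerivAt (fun s => b s * φ s) (-(k / t) * (b t * φ t) - φ t / (2 * t)) t := by
  have hprofile : ∀ s > 0, b s * φ s = s ^ (-k) / 2 * ∫ u in Ioi s, u ^ (k - 1) * φ u := by
    intro s hs
    rw [hb]
    field_simp [(hφpos s hs).ne']
  rw [hprofile t ht]
  refine (hasDerivAt_rpow_neg_mul_integral_Ioi ht hint
    (hφcont.continuousAt (Ioi_mem_nhds ht))).congr_of_eventuallyEq ?_
  filter_upwards [Ioi_mem_nhds ht] with s hs using hprofile s hs

section Radial

variable {ι : Type*} [Fintype ι] [DecidableEq ι]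

theorem fderiv_radial_outer_apply_single {g : ℝ → ℝ} {g' : ℝ} {x : ι → ℝ}
    (hg : HasDerivAt g g' ((∑ l, x l ^ 2) / 2)) (i j : ι) :
    fderiv ℝ (fun y : ι → ℝ => g ((∑ l, y l ^ 2) / 2) * (y i * y j)) x (Pi.single j 1)
      = g' * x j * (x i * x j) + g ((∑ l, x l ^ 2) / 2) * (x i + if i = j then x j else 0) := by
  have hsum : HasFDerivAt (fun y : ι → ℝ => ∑ l, y l ^ 2) _ x :=
    HasFDerivAt.fun_sum (u := Finset.univ) fun l _ => (hasFDerivAt_apply (𝕜 := ℝ) l x).pow 2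
  have hradial : HasFDerivAt (fun y : ι → ℝ => g ((∑ l, y l ^ 2) / 2)) _ x :=
    hg.comp_hasFDerivAt x (by simpa only [div_eq_mul_inv] using hsum.mul_const (2⁻¹ : ℝ))
  have houter := (hasFDerivAt_apply (𝕜 := ℝ) i x).fun_mul (hasFDerivAt_apply (𝕜 := ℝ) j x)
  have h : HasFDerivAt (fun y : ι → ℝ => g ((∑ l, y l ^ 2) / 2) * (y i * y j)) _ x :=
    hradial.fun_mul houter
  rw [h.fderiv]
  simp only [smul_add, Nat.add_one_sub_one, pow_one, nsmul_eq_mul, Nat.cast_ofNat,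
    _root_.add_apply, _root_.smul_apply, ContinuousLinearMap.proj_apply, Pi.single_eq_same,
    smul_eq_mul, mul_one, Pi.single_apply, mul_ite, mul_zero, _root_.sum_apply,
    Finset.sum_ite_eq', Finset.mem_univ, ↓reduceIte, ne_eq, OfNat.ofNat_ne_zero,
    not_false_eq_true, inv_mul_cancel_left₀]
  split_ifs <;> ring

theorem sum_fderiv_radial_outer_apply_single {g : ℝ → ℝ} {g' : ℝ} {x : ι → ℝ}
    (hg : HasDerivAt g g' ((∑ l, x l ^ 2) / 2)) (i : ι) :
    ∑ j, fderiv ℝ (fun y : ι → ℝ => g ((∑ l, y l ^ 2) / 2) * (y i * y j)) x (Pi.single j 1)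
      = x i * ((∑ l, x l ^ 2) * g' + (Fintype.card ι + 1) * g ((∑ l, x l ^ 2) / 2)) := by
  simp only [fderiv_radial_outer_apply_single hg, Finset.sum_add_distrib, ← Finset.mul_sum,
    Finset.sum_ite_eq, Finset.mem_univ, if_true, Finset.sum_const, Finset.card_univ, nsmul_eq_mul]
  have hcubic : ∑ j, g' * x j * (x i * x j) = g' * x i * ∑ j, x j ^ 2 := by
    rw [Finset.mul_sum]
    exact Finset.sum_congr rfl fun j _ => by ring
  rw [hcubic]
  ring

end Radial

theorem half_sum_sq_pos {ι : Type*} [Fintype ι] {x : ι → ℝ} (hx : x ≠ 0) :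
    0 < (∑ l, x l ^ 2) / 2 := by
  obtain ⟨l, hl⟩ := Function.ne_iff.mp hx
  have := Finset.sum_pos' (fun l _ => sq_nonneg (x l))
    ⟨l, Finset.mem_univ l, sq_pos_of_ne_zero hl⟩
  positivity

theorem spherical_stein_kernel_b_general (d : ℕ) (κ : ℝ)
    (φ : ℝ → ℝ)
    (hφpos : ∀ t ∈ Set.Ioi (0 : ℝ), 0 < φ t)
    (hφcont : ContinuousOn φ (Set.Ioi 0))
    (hφint : IntegrableOn (fun u => u ^ (((d : ℝ) - 1) / 2) * φ u) (Set.Ioi 0))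
    (b : ℝ → ℝ)
    (hb : ∀ t, b t = (t ^ (-(((d : ℝ) + 1) / 2)) / (2 * φ t)) *
      ∫ u in Set.Ioi t, u ^ (((d : ℝ) - 1) / 2) * φ u)
    (p : (Fin d → ℝ) → ℝ)
    (hp : ∀ x, p x = κ * φ ((∑ i, x i ^ 2) / 2)) :
    (∀ t ∈ Set.Ioi (0 : ℝ),
      deriv (fun s => b s * φ s) t + (((d : ℝ) + 1) / (2 * t)) * b t * φ t
        = -φ t / (2 * t)) ∧
    (∀ x : Fin d → ℝ, x ≠ 0 → ∀ i,
      (∑ j, fderiv ℝ (fun y =>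
          b ((∑ l, y l ^ 2) / 2) * (y i * y j) * p y) x (Pi.single j 1))
        = -(x i) * p x) := by
  set k : ℝ := ((d : ℝ) + 1) / 2
  simp only [show ((d : ℝ) - 1) / 2 = k - 1 by ring] at hφint hb
  have hbφ : ∀ t > 0,
      HasDerivAt (fun s => b s * φ s) (-(k / t) * (b t * φ t) - φ t / (2 * t)) t :=
    fun t ht => hasDerivAt_mul_of_eq_tail_integral hφpos hφcont hφint hb ht
  refine ⟨fun t ht => ?_, fun x hx i => ?_⟩
  · rw [(hbφ t ht).deriv]
    field_simp
    ring
  · set t := (∑ l, x l ^ 2) / 2 with ht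
    have htpos : 0 < t := half_sum_sq_pos hx
    have hdiv := sum_fderiv_radial_outer_apply_single ((hbφ t htpos).const_mul κ) i
    rw [← ht, show ∑ l, x l ^ 2 = 2 * t by rw [ht]; ring, Fintype.card_fin] at hdiv
    have hfun : ∀ j, (fun y : Fin d → ℝ => b ((∑ l, y l ^ 2) / 2) * (y i * y j) * p y)
        = fun y => κ * (b ((∑ l, y l ^ 2) / 2) * φ ((∑ l, y l ^ 2) / 2)) * (y i * y j) := by
      intro j
      funext y
      rw [hp]
      ring
    simp only [hfun]
    rw [hdiv, hp, ← ht]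
    field_simp
    ring

/-- For a spherical density `p(x) = κ φ(t)` with `t = |x|²/2` and
`∫₀^∞ u^{(d-1)/2} φ(u) du < ∞`, the function
`b(t) = (t^{-(d+1)/2}/(2φ(t))) ∫_t^∞ u^{(d-1)/2} φ(u) du` solves
`(bφ)'(t) + ((d+1)/(2t)) b(t)φ(t) = -φ(t)/(2t)` on `(0,∞)`, and hence
`τ(x) = b(t) x xᵀ` satisfies `div(τ p)(x) = -x p(x)` for `x ≠ 0`. -/
theorem spherical_stein_kernel_b (d : ℕ) (κ : ℝ) (hκ : 0 < κ)
    (φ : ℝ → ℝ)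
    (hφpos : ∀ t ∈ Set.Ioi (0 : ℝ), 0 < φ t)
    (hφcont : ContinuousOn φ (Set.Ioi 0))
    (hφint : IntegrableOn (fun u => u ^ (((d : ℝ) - 1) / 2) * φ u) (Set.Ioi 0))
    (b : ℝ → ℝ)
    (hb : ∀ t, b t = (t ^ (-(((d : ℝ) + 1) / 2)) / (2 * φ t)) *
      ∫ u in Set.Ioi t, u ^ (((d : ℝ) - 1) / 2) * φ u)
    (p : (Fin d → ℝ) → ℝ)
    (hp : ∀ x, p x = κ * φ ((∑ i, x i ^ 2) / 2)) :
    (∀ t ∈ Set.Ioi (0 : ℝ),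
      deriv (fun s => b s * φ s) t + (((d : ℝ) + 1) / (2 * t)) * b t * φ t
        = -φ t / (2 * t)) ∧
    (∀ x : Fin d → ℝ, x ≠ 0 → ∀ i,
      (∑ j, fderiv ℝ (fun y =>
          b ((∑ l, y l ^ 2) / 2) * (y i * y j) * p y) x (Pi.single j 1))
        = -(x i) * p x) :=
  spherical_stein_kernel_b_general d κ φ hφpos hφcont hφint b hb p hp
end
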